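/- Let T1, T2 be q-commuting contractions on H with T = T1T2. With Λ*: D_{T*}-defect space → D_{T1*} ⊕ D_{T2*} the isometry sending D_{T*}h to (D_{T1*}T2*h, D_{T2*}h), P* the projection onto the first coordinate, and U* the isometry sending (D_{T1*}T2*h, D_{T2*}h) to (D_{T1*}h, D_{T2*}T1*h), the operators G1 = Λ** P*^⊥ U* Λ* and G2 = Λ** U** P* Λ* satisfy D_{T*} G1 D_{T*} = T1* − T2 T* and D_{T*} G2 D_{T*} = T2* − q T1 T*. -/

import Mathlib

open ContinuousLinearMap
open scoped InnerProductSpace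

/-! Unwinding the actions of `Λ*`, `U*` and `P*`, each side becomes `⟪D h', D (S h)⟫` with
`D = D_{T2*}, S = T1*` resp. `D = D_{T1*}, S = T2*`, which equals `⟪h', (1 - T T*) S h⟫` for
the corresponding `T`. For the second equation one moves `T1*` past `T2*`: the adjoints
`q`-commute again, `T1* T2* = q T2* T1*`, precisely because `q q̄ = 1`. -/

theorem star_mul_star_eq_smul_of_mul_eq_smul {𝕜 A : Type*} [RCLike 𝕜] [Ring A] [StarRing A]
    [Module 𝕜 A] [StarModule 𝕜 A] {q : 𝕜} (hq : ‖q‖ = 1) {a b : A}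
    (hab : a * b = q • (b * a)) : star a * star b = q • (star b * star a) := by
  have hstar : star b * star a = star q • (star a * star b) := by
    rw [← star_mul, hab, star_smul, star_mul]
  rw [hstar, smul_smul, RCLike.star_def, RCLike.mul_conj, hq, RCLike.ofReal_one, one_pow, one_smul]

theorem inner_apply_apply_of_mul_self_eq {𝕜 E : Type*} [RCLike 𝕜] [NormedAddCommGroup E]
    [InnerProductSpace 𝕜 E] [CompleteSpace E] {D A : E →L[𝕜] E} (hD : IsSelfAdjoint D)
    (hA : D * D = A) (x y : E) : ⟪D x, D y⟫_𝕜 = ⟪x, A y⟫_𝕜 := by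
  rw [← hA, ← adjoint_inner_right, hD.adjoint_eq]; rfl

theorem special_Ando_fundamental_equations_general
    {H : Type*} [NormedAddCommGroup H] [InnerProductSpace ℂ H] [CompleteSpace H]
    (q : ℂ) (hq : ‖q‖ = 1)
    (T1 T2 : H →L[ℂ] H)
    (hcomm : T1 * T2 = q • (T2 * T1))
    (Dst D1s D2s : H →L[ℂ] H)
    (hD1s : D1s.IsPositive) (hD2s : D2s.IsPositive)
    (hD1ssq : D1s * D1s = 1 - T1 * adjoint T1)
    (hD2ssq : D2s * D2s = 1 - T2 * adjoint T2)
    (M : Submodule ℂ H)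
    -- the isometry Λ* : 𝒟_{T*} → 𝒟_{T1*} ⊕₂ 𝒟_{T2*}
    (Λ : M →L[ℂ] WithLp 2 (H × H))
    (hΛ : ∀ (h : H) (x : M), (x : H) = Dst h →
      Λ x = (WithLp.equiv 2 (H × H)).symm (D1s (adjoint T2 h), D2s h))
    -- the projection P* onto the first coordinate
    (P : WithLp 2 (H × H) →L[ℂ] WithLp 2 (H × H))
    (hP : ∀ v : WithLp 2 (H × H),
      P v = (WithLp.equiv 2 (H × H)).symm ((WithLp.equiv 2 (H × H) v).1, 0))
    -- the unitary U*
    (U : WithLp 2 (H × H) →L[ℂ] WithLp 2 (H × H))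
    (hUact : ∀ h : H,
      U ((WithLp.equiv 2 (H × H)).symm (D1s (adjoint T2 h), D2s h))
        = (WithLp.equiv 2 (H × H)).symm (D1s h, D2s (adjoint T1 h))) :
    ∀ (h h' : H) (x x' : M), (x : H) = Dst h → (x' : H) = Dst h' →
      -- ⟨D_{T*} G1 D_{T*} h, h'⟩ = ⟨(T1* − T2 T*) h, h'⟩ with G1 = Λ*^* P*^⊥ U* Λ*
      (⟪Λ x', U (Λ x) - P (U (Λ x))⟫_ℂ
        = ⟪(h' : H), (adjoint T1 - T2 * adjoint (T1 * T2)) h⟫_ℂ) ∧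
      -- ⟨D_{T*} G2 D_{T*} h, h'⟩ = ⟨(T2* − q T1 T*) h, h'⟩ with G2 = Λ*^* U*^* P* Λ*
      (⟪U (Λ x'), P (Λ x)⟫_ℂ
        = ⟪(h' : H), (adjoint T2 - q • (T1 * adjoint (T1 * T2))) h⟫_ℂ) := by
  intro h h' x x' hx hx'
  have hD1 := inner_apply_apply_of_mul_self_eq hD1s.isSelfAdjoint hD1ssq
  have hD2 := inner_apply_apply_of_mul_self_eq hD2s.isSelfAdjoint hD2ssq
  have hadj_comm : adjoint T1 * adjoint T2 = q • (adjoint T2 * adjoint T1) :=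
    star_mul_star_eq_smul_of_mul_eq_smul hq hcomm
  have hadj_mul : adjoint (T1 * T2) = adjoint T2 * adjoint T1 := adjoint_comp T1 T2
  have hG1 : adjoint T1 - T2 * adjoint (T1 * T2) = (1 - T2 * adjoint T2) * adjoint T1 := by
    rw [hadj_mul]; noncomm_ring
  have hG2 : adjoint T2 - q • (T1 * adjoint (T1 * T2)) = (1 - T1 * adjoint T1) * adjoint T2 := by
    rw [hadj_mul, ← mul_smul_comm, ← hadj_comm]; noncomm_ring
  rw [hΛ h x hx, hΛ h' x' hx', hUact, hUact, hP, hP, hG1, hG2]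
  simp only [WithLp.equiv_symm_apply, WithLp.equiv_apply, WithLp.prod_inner_apply,
    WithLp.ofLp_sub, Prod.fst_sub, Prod.snd_sub, sub_self, sub_zero, inner_zero_right, zero_add,
    add_zero]
  exact ⟨hD2 _ _, hD1 _ _⟩

/-- The concrete fundamental operators built from the special Andô tuple
`(𝒟_{T1*} ⊕ 𝒟_{T2*}; Λ*, P*, U*)` of `(T1*, T2*)` satisfy the fundamental equations:
`D_{T*} (Λ*^* P*^⊥ U* Λ*) D_{T*} = T1* − T2 T*` and
`D_{T*} (Λ*^* U*^* P* Λ*) D_{T*} = T2* − q T1 T*`.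
(These operator equations are stated via inner products against arbitrary vectors, with
Mathlib's convention that the inner product is linear in the second variable.) -/
theorem special_Ando_fundamental_equations
    {H : Type*} [NormedAddCommGroup H] [InnerProductSpace ℂ H] [CompleteSpace H]
    (q : ℂ) (hq : ‖q‖ = 1)
    (T1 T2 : H →L[ℂ] H) (hT1 : ‖T1‖ ≤ 1) (hT2 : ‖T2‖ ≤ 1)
    (hcomm : T1 * T2 = q • (T2 * T1))
    (Dst D1s D2s : H →L[ℂ] H)
    (hDst : Dst.IsPositive) (hD1s : D1s.IsPositive) (hD2s : D2s.IsPositive)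
    (hDstsq : Dst * Dst = 1 - (T1 * T2) * adjoint (T1 * T2))
    (hD1ssq : D1s * D1s = 1 - T1 * adjoint T1)
    (hD2ssq : D2s * D2s = 1 - T2 * adjoint T2)
    (M : Submodule ℂ H) (hM : M = (LinearMap.range (Dst : H →ₗ[ℂ] H)).topologicalClosure)
    -- the isometry Λ* : 𝒟_{T*} → 𝒟_{T1*} ⊕₂ 𝒟_{T2*}
    (Λ : M →L[ℂ] WithLp 2 (H × H))
    (hΛiso : ∀ x : M, ‖Λ x‖ = ‖x‖)
    (hΛ : ∀ (h : H) (x : M), (x : H) = Dst h →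
      Λ x = (WithLp.equiv 2 (H × H)).symm (D1s (adjoint T2 h), D2s h))
    -- the projection P* onto the first coordinate
    (P : WithLp 2 (H × H) →L[ℂ] WithLp 2 (H × H))
    (hP : ∀ v : WithLp 2 (H × H),
      P v = (WithLp.equiv 2 (H × H)).symm ((WithLp.equiv 2 (H × H) v).1, 0))
    -- the unitary U*
    (U : WithLp 2 (H × H) →L[ℂ] WithLp 2 (H × H))
    (hUuni : adjoint U ∘L U = 1 ∧ U ∘L adjoint U = 1)
    (hUact : ∀ h : H,
      U ((WithLp.equiv 2 (H × H)).symm (D1s (adjoint T2 h), D2s h))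
        = (WithLp.equiv 2 (H × H)).symm (D1s h, D2s (adjoint T1 h))) :
    ∀ (h h' : H) (x x' : M), (x : H) = Dst h → (x' : H) = Dst h' →
      -- ⟨D_{T*} G1 D_{T*} h, h'⟩ = ⟨(T1* − T2 T*) h, h'⟩ with G1 = Λ*^* P*^⊥ U* Λ*
      (⟪Λ x', U (Λ x) - P (U (Λ x))⟫_ℂ
        = ⟪(h' : H), (adjoint T1 - T2 * adjoint (T1 * T2)) h⟫_ℂ) ∧
      -- ⟨D_{T*} G2 D_{T*} h, h'⟩ = ⟨(T2* − q T1 T*) h, h'⟩ with G2 = Λ*^* U*^* P* Λ*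
      (⟪U (Λ x'), P (Λ x)⟫_ℂ
        = ⟪(h' : H), (adjoint T2 - q • (T1 * adjoint (T1 * T2))) h⟫_ℂ) :=
  special_Ando_fundamental_equations_general q hq T1 T2 hcomm Dst D1s D2s hD1s hD2s hD1ssq hD2ssq M
    Λ hΛ P hP U hUact
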